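/- Let q, u, v ∈ ℂ with |q| < 1, |u| < 1 and |v| < 1. Then the doubly indexed family (q^{kl} u^{k} v^{l} / ((q;q)_k (q;q)_l))_{(k,l) ∈ ℕ×ℕ} is summable, and Σ_{k,l ≥ 0} q^{kl} u^{k} v^{l} / ((q;q)_k (q;q)_l) = (uv;q)_∞ / ((u;q)_∞ (v;q)_∞). -/

import Mathlib

/-!
Summing first over `l`, Euler's identity `Σ_l z^l/(q;q)_l = 1/(z;q)_∞` at `z = q^k v` turns the
double sum into `(1/(v;q)_∞) Σ_k (v;q)_k u^k/(q;q)_k`, and the `q`-binomial theorem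
`Σ_k (a;q)_k z^k/(q;q)_k = (az;q)_∞/(z;q)_∞` evaluates the remaining sum. The `q`-binomial series
`φ(z)` satisfies `(1 - z) φ(z) = (1 - az) φ(qz)`; iterating gives
`φ(z) (z;q)_n = (az;q)_n φ(q^n z)`, and `φ(q^n z) → φ(0) = 1` by dominated convergence.
Euler's identity is the case `a = 0`.
-/

open Finset

/-- The `q`-shifted factorial `(a;q)_n = ∏_{i=0}^{n-1} (1 - a q^i)` in `ℂ`. -/
noncomputable def qPoch (q a : ℂ) (n : ℕ) : ℂ :=
  ∏ i ∈ Finset.range n, (1 - a * q ^ i)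

/-- The infinite `q`-shifted factorial `(a;q)_∞ = ∏_{i=0}^{∞} (1 - a q^i)`. -/
noncomputable def qPochInf (q a : ℂ) : ℂ :=
  ∏' i : ℕ, (1 - a * q ^ i)

open Filter Topology

noncomputable def qBinomialSeries (q a z : ℂ) : ℂ :=
  ∑' k : ℕ, qPoch q a k / qPoch q q k * z ^ k

section

variable {q : ℂ}

lemma qPoch_succ (q a : ℂ) (n : ℕ) : qPoch q a (n + 1) = qPoch q a n * (1 - a * q ^ n) :=
  prod_range_succ _ _

@[simp] lemma qPoch_zero_left (q : ℂ) (n : ℕ) : qPoch q 0 n = 1 := by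
  simp [qPoch]

@[simp] lemma qPochInf_zero_left (q : ℂ) : qPochInf q 0 = 1 := by
  simp [qPochInf]

lemma norm_mul_pow_le (hq : ‖q‖ ≤ 1) (a : ℂ) (i : ℕ) : ‖a * q ^ i‖ ≤ ‖a‖ := by
  rw [norm_mul, norm_pow]
  exact mul_le_of_le_one_right (norm_nonneg a) (pow_le_one₀ (norm_nonneg q) hq)

lemma norm_mul_pow_lt_one (hq : ‖q‖ ≤ 1) {a : ℂ} (ha : ‖a‖ < 1) (i : ℕ) : ‖a * q ^ i‖ < 1 :=
  (norm_mul_pow_le hq a i).trans_lt ha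

lemma one_sub_mul_pow_ne_zero (hq : ‖q‖ ≤ 1) {a : ℂ} (ha : ‖a‖ < 1) (i : ℕ) :
    1 - a * q ^ i ≠ 0 := by
  intro h
  have := norm_mul_pow_lt_one hq ha i
  rw [← sub_eq_zero.mp h, norm_one] at this
  exact lt_irrefl _ this

lemma qPoch_ne_zero (hq : ‖q‖ ≤ 1) {a : ℂ} (ha : ‖a‖ < 1) (n : ℕ) : qPoch q a n ≠ 0 :=
  prod_ne_zero_iff.mpr fun i _ => one_sub_mul_pow_ne_zero hq ha i

lemma summable_norm_mul_pow (hq : ‖q‖ < 1) (a : ℂ) : Summable fun i : ℕ => ‖a * q ^ i‖ := by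
  simpa [norm_mul, norm_pow] using
    (summable_geometric_of_lt_one (norm_nonneg q) hq).mul_left ‖a‖

lemma multipliable_one_sub_mul_pow (hq : ‖q‖ < 1) (a : ℂ) :
    Multipliable fun i : ℕ => 1 - a * q ^ i := by
  simpa [sub_eq_add_neg] using multipliable_one_add_of_summable (f := fun i : ℕ => -(a * q ^ i))
    (by simpa using summable_norm_mul_pow hq a)

lemma qPochInf_ne_zero (hq : ‖q‖ < 1) {a : ℂ} (ha : ‖a‖ < 1) : qPochInf q a ≠ 0 := by
  simpa [qPochInf, sub_eq_add_neg] using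
    tprod_one_add_ne_zero_of_summable (f := fun i : ℕ => -(a * q ^ i))
      (fun i => by simpa [← sub_eq_add_neg] using one_sub_mul_pow_ne_zero hq.le ha i)
      (by simpa using summable_norm_mul_pow hq a)

lemma tendsto_qPoch (hq : ‖q‖ < 1) (a : ℂ) :
    Tendsto (qPoch q a) atTop (𝓝 (qPochInf q a)) :=
  (multipliable_one_sub_mul_pow hq a).hasProd.tendsto_prod_nat

lemma qPoch_mul_qPochInf_mul_pow (hq : ‖q‖ < 1) (a : ℂ) (k : ℕ) :
    qPoch q a k * qPochInf q (a * q ^ k) = qPochInf q a := by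
  have hshift : (fun i : ℕ => 1 - a * q ^ (i + k)) = fun i => 1 - a * q ^ k * q ^ i := by
    ext i; ring
  have h := Multipliable.prod_mul_tprod_nat_mul' (f := fun i : ℕ => 1 - a * q ^ i)
    (hshift ▸ multipliable_one_sub_mul_pow hq (a * q ^ k))
  rwa [hshift] at h

lemma exists_norm_qPoch_div_qPoch_le (hq : ‖q‖ < 1) (a : ℂ) :
    ∃ M, ∀ k, ‖qPoch q a k / qPoch q q k‖ ≤ M := by
  have h := (tendsto_qPoch hq a).div (tendsto_qPoch hq q) (qPochInf_ne_zero hq hq)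
  obtain ⟨M, hM⟩ := isBounded_iff_forall_norm_le.mp (Metric.isBounded_range_of_tendsto _ h)
  exact ⟨M, fun k => hM _ ⟨k, rfl⟩⟩

lemma summable_norm_qBinomialSeries_term (hq : ‖q‖ < 1) (a : ℂ) {z : ℂ} (hz : ‖z‖ < 1) :
    Summable fun k => ‖qPoch q a k / qPoch q q k * z ^ k‖ := by
  obtain ⟨M, hM⟩ := exists_norm_qPoch_div_qPoch_le hq a
  refine .of_nonneg_of_le (fun _ => norm_nonneg _) (fun k => ?_)
    ((summable_geometric_of_lt_one (norm_nonneg z) hz).mul_left M)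
  rw [norm_mul, norm_pow]
  exact mul_le_mul_of_nonneg_right (hM k) (by positivity)

lemma qPoch_div_qPoch_succ_mul (hq : ‖q‖ < 1) (a : ℂ) (k : ℕ) :
    qPoch q a (k + 1) / qPoch q q (k + 1) * (1 - q ^ (k + 1)) =
      qPoch q a k / qPoch q q k * (1 - a * q ^ k) := by
  have h₁ := qPoch_ne_zero hq.le hq k
  have h₂ := one_sub_mul_pow_ne_zero hq.le hq k
  rw [← pow_succ'] at h₂
  rw [qPoch_succ, qPoch_succ, ← pow_succ']
  field_simp

lemma qBinomialSeries_functional_eq (hq : ‖q‖ < 1) (a : ℂ) {z : ℂ} (hz : ‖z‖ < 1) :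
    (1 - z) * qBinomialSeries q a z = (1 - a * z) * qBinomialSeries q a (z * q) := by
  set c : ℕ → ℂ := fun k => qPoch q a k / qPoch q q k
  have hS : HasSum (fun k => c k * z ^ k) (qBinomialSeries q a z) :=
    (summable_norm_qBinomialSeries_term hq a hz).of_norm.hasSum
  have hzq : ‖z * q‖ < 1 := by simpa using norm_mul_pow_lt_one hq.le hz 1
  have hT : HasSum (fun k => c k * (z * q) ^ k) (qBinomialSeries q a (z * q)) :=
    (summable_norm_qBinomialSeries_term hq a hzq).of_norm.hasSum
  have hdiff := (hasSum_nat_add_iff' 1).mpr (hS.sub hT)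
  have hterm : (fun k => c (k + 1) * z ^ (k + 1) - c (k + 1) * (z * q) ^ (k + 1)) =
      fun k => z * (c k * z ^ k) - a * z * (c k * (z * q) ^ k) := by
    ext k
    linear_combination z ^ (k + 1) * qPoch_div_qPoch_succ_mul hq a k
  rw [hterm] at hdiff
  have := hdiff.unique ((hS.mul_left z).sub (hT.mul_left (a * z)))
  simp only [range_one, sum_singleton, pow_zero, mul_one, sub_self, sub_zero] at this
  linear_combination this

lemma qBinomialSeries_mul_qPoch (hq : ‖q‖ < 1) (a : ℂ) {z : ℂ} (hz : ‖z‖ < 1) (n : ℕ) :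
    qBinomialSeries q a z * qPoch q z n =
      qPoch q (a * z) n * qBinomialSeries q a (z * q ^ n) := by
  induction n with
  | zero => simp [qPoch]
  | succ n ih =>
    have h := qBinomialSeries_functional_eq hq a (norm_mul_pow_lt_one hq.le hz n)
    rw [mul_assoc, ← pow_succ] at h
    rw [qPoch_succ, qPoch_succ]
    linear_combination (1 - z * q ^ n) * ih + qPoch q (a * z) n * h

lemma tendsto_qBinomialSeries_mul_pow (hq : ‖q‖ < 1) (a : ℂ) {z : ℂ} (hz : ‖z‖ < 1) :
    Tendsto (fun n => qBinomialSeries q a (z * q ^ n)) atTop (𝓝 1) := by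
  have hlim : Tendsto (fun n => z * q ^ n) atTop (𝓝 0) := by
    simpa using (tendsto_pow_atTop_nhds_zero_of_norm_lt_one hq).const_mul z
  have h := tendsto_tsum_of_dominated_convergence (summable_norm_qBinomialSeries_term hq a hz)
    (fun k => (hlim.pow k).const_mul (qPoch q a k / qPoch q q k))
    (Eventually.of_forall fun n k => ?_)
  · have h0 : ∑' k, qPoch q a k / qPoch q q k * (0 : ℂ) ^ k = 1 := by
      rw [tsum_eq_single 0 fun k hk => by simp [hk]]
      simp [qPoch]
    rwa [h0] at h
  · rw [norm_mul, norm_mul, norm_pow, norm_pow]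
    gcongr
    exact norm_mul_pow_le hq.le z n

theorem qBinomialSeries_mul_qPochInf (hq : ‖q‖ < 1) (a : ℂ) {z : ℂ} (hz : ‖z‖ < 1) :
    qBinomialSeries q a z * qPochInf q z = qPochInf q (a * z) := by
  have h := (tendsto_qPoch hq (a * z)).mul (tendsto_qBinomialSeries_mul_pow hq a hz)
  rw [mul_one] at h
  refine tendsto_nhds_unique ?_ h
  simpa only [qBinomialSeries_mul_qPoch hq a hz] using
    (tendsto_qPoch hq z).const_mul (qBinomialSeries q a z)

theorem tsum_pow_div_qPoch (hq : ‖q‖ < 1) {z : ℂ} (hz : ‖z‖ < 1) :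
    ∑' k, z ^ k / qPoch q q k = (qPochInf q z)⁻¹ := by
  have h := qBinomialSeries_mul_qPochInf hq 0 hz
  simp only [qBinomialSeries, qPoch_zero_left, zero_mul, qPochInf_zero_left] at h
  exact eq_inv_of_mul_eq_one_left (by simpa [div_eq_mul_inv, mul_comm] using h)

lemma summable_norm_pow_div_qPoch (hq : ‖q‖ < 1) {z : ℂ} (hz : ‖z‖ < 1) :
    Summable fun k => ‖z ^ k / qPoch q q k‖ := by
  simpa [div_eq_mul_inv, mul_comm] using summable_norm_qBinomialSeries_term hq 0 hz

lemma tsum_mul_pow_pow_div_qPoch (hq : ‖q‖ < 1) {v : ℂ} (hv : ‖v‖ < 1) (k : ℕ) :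
    ∑' l, (v * q ^ k) ^ l / qPoch q q l = qPoch q v k / qPochInf q v := by
  have h₁ := qPoch_ne_zero hq.le hv k
  have h₂ := qPochInf_ne_zero hq (norm_mul_pow_lt_one hq.le hv k)
  rw [tsum_pow_div_qPoch hq (norm_mul_pow_lt_one hq.le hv k), ← qPoch_mul_qPochInf_mul_pow hq v k]
  field_simp

lemma summable_pow_mul_pow_mul_pow_div_qPoch_mul_qPoch (hq : ‖q‖ < 1) {u v : ℂ} (hu : ‖u‖ < 1)
    (hv : ‖v‖ < 1) :
    Summable fun p : ℕ × ℕ =>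
      q ^ (p.1 * p.2) * u ^ p.1 * v ^ p.2 / (qPoch q q p.1 * qPoch q q p.2) := by
  refine .of_norm_bounded (Summable.mul_norm (summable_norm_pow_div_qPoch hq hu)
    (summable_norm_pow_div_qPoch hq hv)) fun ⟨k, l⟩ => ?_
  have h : q ^ (k * l) * u ^ k * v ^ l / (qPoch q q k * qPoch q q l) =
      q ^ (k * l) * (u ^ k / qPoch q q k * (v ^ l / qPoch q q l)) := by
    ring
  rw [h, norm_mul, norm_pow]
  exact mul_le_of_le_one_left (norm_nonneg _) (pow_le_one₀ (norm_nonneg q) hq.le)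

end

/-- equation (B.5), the commuting-variable pentagon identity:
for `|q|, |u|, |v| < 1`, the family `q^{kl} u^k v^l / ((q;q)_k (q;q)_l)` is summable and
`Σ_{k,l≥0} q^{kl} u^k v^l/((q;q)_k (q;q)_l) = (uv;q)_∞ / ((u;q)_∞ (v;q)_∞)`. -/
theorem statement5 (q u v : ℂ)
    (hq : ‖q‖ < 1) (hu : ‖u‖ < 1) (hv : ‖v‖ < 1) :
    Summable (fun p : ℕ × ℕ =>
      q ^ (p.1 * p.2) * u ^ p.1 * v ^ p.2 / (qPoch q q p.1 * qPoch q q p.2)) ∧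
    (∑' p : ℕ × ℕ, q ^ (p.1 * p.2) * u ^ p.1 * v ^ p.2 / (qPoch q q p.1 * qPoch q q p.2))
      = qPochInf q (u * v) / (qPochInf q u * qPochInf q v) := by
  have hsum := summable_pow_mul_pow_mul_pow_div_qPoch_mul_qPoch hq hu hv
  have hrow (k l : ℕ) : q ^ (k * l) * u ^ k * v ^ l / (qPoch q q k * qPoch q q l) =
      u ^ k / qPoch q q k * ((v * q ^ k) ^ l / qPoch q q l) := by
    rw [mul_pow, ← pow_mul]; ring
  refine ⟨hsum, ?_⟩
  rw [hsum.tsum_prod' hsum.prod_factor]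
  simp_rw [hrow, tsum_mul_left, tsum_mul_pow_pow_div_qPoch hq hv]
  calc ∑' k, u ^ k / qPoch q q k * (qPoch q v k / qPochInf q v)
      = qBinomialSeries q v u / qPochInf q v := by
        rw [qBinomialSeries, ← tsum_div_const]
        exact tsum_congr fun k => by ring
    _ = qPochInf q (u * v) / (qPochInf q u * qPochInf q v) := by
        have := qPochInf_ne_zero hq hu
        rw [mul_comm u v, ← qBinomialSeries_mul_qPochInf hq v hu]
        field_simp
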